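/- Let Y, Ŷ, A, D be random variables with Y, Ŷ taking values in {1,...,K}, A, D in {0,1}, and P(Ŷ = Y | D = 1) = 1. Fix y with p_y⁺ := P(Y=y, A=1) > 0 and p_y⁻ := P(Y=y, A=0) > 0, and set p_y = P(Y=y), p_D = P(D=1), q_y = P(Y=y | D=1), q_y⁺ = P(Y=y, A=1 | D=1), C⁺ = P(Ŷ=y | D=0, Y=y, A=1), C⁻ = P(Ŷ=y | D=0, Y=y, A=0). Then the equal opportunity gap Δeq.opp.(y) := P(Ŷ=y | A=1, Y=y) − P(Ŷ=y | A=0, Y=y) equals (p_D / (p_y⁺(p_y − p_y⁺)))·(C⁺ − 1)·(q_y p_y⁺ − p_y q_y⁺) + (C⁺ − C⁻)·(1 − p_D(q_y − q_y⁺)/(p_y − p_y⁺)). -/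

import Mathlib

/-!
Split every event by `D`. On `D = 1` the classifier is almost surely correct, so on the group
`Y = y, A = a` it outputs `y` with the full mass `P(D = 1, Y = y, A = a)`; on `D = 0` it outputs `y`
with mass `C^± · P(D = 0, Y = y, A = a)`. Both conditional hit rates, and all of `p_y`, `p_y⁺`,
`p_D q_y`, `p_D q_y⁺`, are thus expressed through the four cells `P(D = d, Y = y, A = a)`, and the
identity becomes one of rational functions in these cells.
-/

open scoped BigOperators Classical

noncomputable def pr {Ω : Type*} [Fintype Ω] (P : Ω → ℝ) (E : Set Ω) : ℝ :=
  ∑ ω, if ω ∈ E then P ω else 0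

noncomputable def cpr {Ω : Type*} [Fintype Ω] (P : Ω → ℝ) (E F : Set Ω) : ℝ :=
  pr P (E ∩ F) / pr P F

section Pr

variable {Ω : Type*} [Fintype Ω] {P : Ω → ℝ}

lemma pr_nonneg (hP : ∀ ω, 0 ≤ P ω) (E : Set Ω) : 0 ≤ pr P E :=
  Finset.sum_nonneg fun ω _ => ite_nonneg (hP ω) le_rfl

lemma pr_mono (hP : ∀ ω, 0 ≤ P ω) {E F : Set Ω} (h : E ⊆ F) : pr P E ≤ pr P F := by
  refine Finset.sum_le_sum fun ω _ => ?_
  by_cases hE : ω ∈ E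
  · simp [hE, h hE]
  · simpa [hE] using ite_nonneg (hP ω) le_rfl

lemma pr_eq_zero_of_subset (hP : ∀ ω, 0 ≤ P ω) {E F : Set Ω} (hF : pr P F = 0) (h : E ⊆ F) :
    pr P E = 0 :=
  le_antisymm (hF ▸ pr_mono hP h) (pr_nonneg hP E)

lemma pr_inter_add_pr_diff (P : Ω → ℝ) (E T : Set Ω) :
    pr P (E ∩ T) + pr P (E \ T) = pr P E := by
  simp only [pr, ← Finset.sum_add_distrib]
  refine Finset.sum_congr rfl fun ω _ => ?_
  by_cases hE : ω ∈ E <;> by_cases hT : ω ∈ T <;> simp [hE, hT]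

lemma pr_true_inter_add_pr_false_inter (P : Ω → ℝ) (D : Ω → Bool) (E : Set Ω) :
    pr P ({ω | D ω = true} ∩ E) + pr P ({ω | D ω = false} ∩ E) = pr P E := by
  rw [← pr_inter_add_pr_diff P E {ω | D ω = true}, Set.inter_comm]
  congr 2
  ext ω
  simp [and_comm]

lemma cpr_mul_pr (hP : ∀ ω, 0 ≤ P ω) (E F : Set Ω) : cpr P E F * pr P F = pr P (E ∩ F) := by
  rcases eq_or_ne (pr P F) 0 with hF | hF
  · rw [hF, mul_zero, pr_eq_zero_of_subset hP hF Set.inter_subset_right]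
  · exact div_mul_cancel₀ _ hF

lemma pr_inter_eq_of_cpr_eq_one {E F : Set Ω} (h : cpr P E F = 1) : pr P (E ∩ F) = pr P F := by
  have hF : pr P F ≠ 0 := fun hF => by simp [cpr, hF] at h
  exact (div_eq_one_iff_eq hF).1 h

lemma pr_inter_eq_of_subset (hP : ∀ ω, 0 ≤ P ω) {E F S : Set Ω}
    (hEF : pr P (E ∩ F) = pr P F) (hS : S ⊆ F) : pr P (E ∩ S) = pr P S := by
  have hFE : pr P (F \ E) = 0 := by
    have := pr_inter_add_pr_diff P F E
    rw [Set.inter_comm, hEF] at this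
    linarith
  have hSE : pr P (S \ E) = 0 := pr_eq_zero_of_subset hP hFE (Set.sdiff_subset_sdiff_left hS)
  rw [← pr_inter_add_pr_diff P S E, hSE, add_zero, Set.inter_comm]

end Pr

lemma pr_hit_of_memorizing {Ω : Type*} [Fintype Ω] {P : Ω → ℝ} (hP : ∀ ω, 0 ≤ P ω)
    {K : ℕ} {Y Yh : Ω → Fin K} {D : Ω → Bool}
    (hmem : cpr P {ω | Yh ω = Y ω} {ω | D ω = true} = 1) {y : Fin K} {G : Set Ω}
    (hG : G ⊆ {ω | Y ω = y}) :
    pr P ({ω | Yh ω = y} ∩ G) = pr P ({ω | D ω = true} ∩ G)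
      + cpr P {ω | Yh ω = y} ({ω | D ω = false} ∩ G) * pr P ({ω | D ω = false} ∩ G) := by
  have hcorrect : {ω | D ω = true} ∩ ({ω | Yh ω = y} ∩ G)
      = {ω | Yh ω = Y ω} ∩ ({ω | D ω = true} ∩ G) := by
    ext ω
    constructor
    · rintro ⟨hD, hYh, hωG⟩
      exact ⟨hYh.trans (hG hωG).symm, hD, hωG⟩
    · rintro ⟨hYh, hD, hωG⟩
      exact ⟨hD, hYh.trans (hG hωG), hωG⟩
  rw [← pr_true_inter_add_pr_false_inter P D, cpr_mul_pr hP, Set.inter_left_comm {ω | Yh ω = y},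
    hcorrect, pr_inter_eq_of_subset hP (pr_inter_eq_of_cpr_eq_one hmem) Set.inter_subset_left]

lemma cpr_hit_of_memorizing {Ω : Type*} [Fintype Ω] {P : Ω → ℝ} (hP : ∀ ω, 0 ≤ P ω)
    {K : ℕ} {Y Yh : Ω → Fin K} {D : Ω → Bool}
    (hmem : cpr P {ω | Yh ω = Y ω} {ω | D ω = true} = 1) {y : Fin K} {G : Set Ω}
    (hG : G ⊆ {ω | Y ω = y}) :
    cpr P {ω | Yh ω = y} G = (pr P ({ω | D ω = true} ∩ G)
      + cpr P {ω | Yh ω = y} ({ω | D ω = false} ∩ G) * pr P ({ω | D ω = false} ∩ G))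
      / (pr P ({ω | D ω = true} ∩ G) + pr P ({ω | D ω = false} ∩ G)) := by
  rw [cpr, pr_hit_of_memorizing hP hmem hG, pr_true_inter_add_pr_false_inter]

theorem stmt_1_general {Ω : Type*} [Fintype Ω] (P : Ω → ℝ)
    (hP0 : ∀ ω, 0 ≤ P ω)
    {K : ℕ} (Y Yh : Ω → Fin K) (A D : Ω → Bool)
    (hmem : cpr P {ω | Yh ω = Y ω} {ω | D ω = true} = 1)
    (y : Fin K)
    (hYA1 : 0 < pr P ({ω | Y ω = y} ∩ {ω | A ω = true}))
    (hYA0 : 0 < pr P ({ω | Y ω = y} ∩ {ω | A ω = false}))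
    (pD py pyp qy qyp Cp Cm : ℝ)
    (hpD : pD = pr P {ω | D ω = true})
    (hpy : py = pr P {ω | Y ω = y})
    (hpyp : pyp = pr P ({ω | Y ω = y} ∩ {ω | A ω = true}))
    (hqy : qy = cpr P {ω | Y ω = y} {ω | D ω = true})
    (hqyp : qyp = cpr P ({ω | Y ω = y} ∩ {ω | A ω = true}) {ω | D ω = true})
    (hCp : Cp = cpr P {ω | Yh ω = y} ({ω | D ω = false} ∩ ({ω | Y ω = y} ∩ {ω | A ω = true})))
    (hCm : Cm = cpr P {ω | Yh ω = y} ({ω | D ω = false} ∩ ({ω | Y ω = y} ∩ {ω | A ω = false}))) :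
    cpr P {ω | Yh ω = y} ({ω | A ω = true} ∩ {ω | Y ω = y})
      - cpr P {ω | Yh ω = y} ({ω | A ω = false} ∩ {ω | Y ω = y})
      = pD / (pyp * (py - pyp)) * (Cp - 1) * (qy * pyp - py * qyp)
        + (Cp - Cm) * (1 - pD * (qy - qyp) / (py - pyp)) := by
  set Yy := {ω | Y ω = y}
  set Hy := {ω | Yh ω = y}
  set A1 := {ω | A ω = true}
  set A0 := {ω | A ω = false}
  set a1 := pr P ({ω | D ω = true} ∩ (Yy ∩ A1))
  set b1 := pr P ({ω | D ω = false} ∩ (Yy ∩ A1))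
  set a0 := pr P ({ω | D ω = true} ∩ (Yy ∩ A0))
  set b0 := pr P ({ω | D ω = false} ∩ (Yy ∩ A0))
  have hpyp' : pyp = a1 + b1 := by rw [hpyp, pr_true_inter_add_pr_false_inter]
  have hpy' : py = pyp + (a0 + b0) := by
    rw [hpy, hpyp, pr_true_inter_add_pr_false_inter, ← pr_true_inter_add_pr_false_inter P A Yy,
      Set.inter_comm A1, Set.inter_comm A0]
  have hqy' : pD * qy = a1 + a0 := by
    rw [hpD, hqy, mul_comm, cpr_mul_pr hP0, ← pr_true_inter_add_pr_false_inter P A]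
    congr 2 <;> ext ω <;> simp only [Set.mem_inter_iff] <;> tauto
  have hqyp' : pD * qyp = a1 := by rw [hpD, hqyp, mul_comm, cpr_mul_pr hP0, Set.inter_comm]
  have hCp' : cpr P Hy (A1 ∩ Yy) = (a1 + Cp * b1) / (a1 + b1) := by
    rw [Set.inter_comm, hCp, cpr_hit_of_memorizing hP0 hmem Set.inter_subset_left]
  have hCm' : cpr P Hy (A0 ∩ Yy) = (a0 + Cm * b0) / (a0 + b0) := by
    rw [Set.inter_comm, hCm, cpr_hit_of_memorizing hP0 hmem Set.inter_subset_left]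
  have hp1 : a1 + b1 ≠ 0 := hpyp' ▸ hpyp ▸ hYA1.ne'
  have hp0 : a0 + b0 ≠ 0 := (pr_true_inter_add_pr_false_inter P D _).symm ▸ hYA0.ne'
  have hrhs : pD / (pyp * (py - pyp)) * (Cp - 1) * (qy * pyp - py * qyp)
      + (Cp - Cm) * (1 - pD * (qy - qyp) / (py - pyp))
      = (Cp - 1) * ((a1 + a0) * pyp - py * a1) / (pyp * (py - pyp))
        + (Cp - Cm) * (1 - (a1 + a0 - a1) / (py - pyp)) := by
    rw [← hqy', ← hqyp']
    ring
  rw [hCp', hCm', hrhs, hpy', add_sub_cancel_left, hpyp']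
  field_simp
  ring

/-- equal opportunity gap of the memorizing classifier. -/
theorem stmt_1 {Ω : Type*} [Fintype Ω] (P : Ω → ℝ)
    (hP0 : ∀ ω, 0 ≤ P ω) (hP1 : ∑ ω, P ω = 1)
    {K : ℕ} (Y Yh : Ω → Fin K) (A D : Ω → Bool)
    (hmem : cpr P {ω | Yh ω = Y ω} {ω | D ω = true} = 1)
    (y : Fin K)
    (hD1 : 0 < pr P {ω | D ω = true})
    (hYA1 : 0 < pr P ({ω | Y ω = y} ∩ {ω | A ω = true}))
    (hYA0 : 0 < pr P ({ω | Y ω = y} ∩ {ω | A ω = false}))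
    (hD0YA1 : 0 < pr P ({ω | D ω = false} ∩ ({ω | Y ω = y} ∩ {ω | A ω = true})))
    (hD0YA0 : 0 < pr P ({ω | D ω = false} ∩ ({ω | Y ω = y} ∩ {ω | A ω = false})))
    (pD py pyp qy qyp Cp Cm : ℝ)
    (hpD : pD = pr P {ω | D ω = true})
    (hpy : py = pr P {ω | Y ω = y})
    (hpyp : pyp = pr P ({ω | Y ω = y} ∩ {ω | A ω = true}))
    (hqy : qy = cpr P {ω | Y ω = y} {ω | D ω = true})
    (hqyp : qyp = cpr P ({ω | Y ω = y} ∩ {ω | A ω = true}) {ω | D ω = true})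
    (hCp : Cp = cpr P {ω | Yh ω = y} ({ω | D ω = false} ∩ ({ω | Y ω = y} ∩ {ω | A ω = true})))
    (hCm : Cm = cpr P {ω | Yh ω = y} ({ω | D ω = false} ∩ ({ω | Y ω = y} ∩ {ω | A ω = false}))) :
    cpr P {ω | Yh ω = y} ({ω | A ω = true} ∩ {ω | Y ω = y})
      - cpr P {ω | Yh ω = y} ({ω | A ω = false} ∩ {ω | Y ω = y})
      = pD / (pyp * (py - pyp)) * (Cp - 1) * (qy * pyp - py * qyp)
        + (Cp - Cm) * (1 - pD * (qy - qyp) / (py - pyp)) :=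
  stmt_1_general P hP0 Y Yh A D hmem y hYA1 hYA0 pD py pyp qy qyp Cp Cm hpD hpy hpyp hqy hqyp hCp
    hCm
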